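/- Let q = p be an odd prime and let U ⊆ F_p³ be a set of p² − 2 points that does not determine the points of C, is not extendable, and satisfies ∑_{u∈U} u = (0,0,0). Then for every nonzero (y,z,w) ∈ F_p³: the line at infinity l(y,z,w) meets C in no point (i.e. there is no nonzero t ∈ F_p³ with Q(t) = 0 and (y,z,w)·t = 0) if and only if σ₂(y,z,w) is a non-square in F_p. -/

import Mathlib

/-- The dot product on `F³`. -/
def dot3 {F : Type*} [Field F] (u v : F × F × F) : F :=
  u.1 * v.1 + u.2.1 * v.2.1 + u.2.2 * v.2.2

/-- The nondegenerate quadratic form `Q(t₀,t₁,t₂) = t₁² − t₀t₂` defining the conic `C`. -/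
def quadQ {F : Type*} [Field F] (t : F × F × F) : F :=
  t.2.1 ^ 2 - t.1 * t.2.2

/-- `U` does not determine the points of the conic `C`:
`Q(u − u') ≠ 0` for all distinct `u, u' ∈ U`. -/
def NoDetermine {F : Type*} [Field F] (U : Finset (F × F × F)) : Prop :=
  ∀ u ∈ U, ∀ u' ∈ U, u ≠ u' → quadQ (u - u') ≠ 0

/-- The line at infinity `l(y,z,w)` meets the conic `C`. -/
def MeetsConic {F : Type*} [Field F] (v : F × F × F) : Prop :=
  ∃ t : F × F × F, t ≠ 0 ∧ quadQ t = 0 ∧ dot3 v t = 0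

/-- `σ_i(y,z,w)`: the `i`-th elementary symmetric function of the multiset
`{u·(y,z,w) : u ∈ U}`. -/
def sigmaU {F : Type*} [Field F] (U : Finset (F × F × F)) (v : F × F × F) (i : ℕ) : F :=
  (U.val.map (fun u => dot3 u v)).esymm i

/-!
Fix an isotropic direction `t`. No two points of `U` lie on a common line parallel to `t`, so
exactly two of the `p²` such lines, `r₁ + F t` and `r₂ + F t`, miss `U`. For `v ⊥ t` the value
`v·x` is constant on these lines and every value is taken by a multiple of `p` of them, so
`∑_{u ∈ U} g (v·u) = -(g (v·r₁) + g (v·r₂))` for every `g`. With `∑ u = 0` this gives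
`v·r₁ + v·r₂ = 0` and `σ₂(v) = (v·r₁)²`: on every plane `t^⊥`, i.e. on every line `l(v)` meeting
`C`, the quadratic form `σ₂` is the square of a linear form.

A ternary quadratic form with this property is either `s² (z² - 4 y w)` with `s ≠ 0`, and then
`σ₂(v)` is a square exactly when `l(v)` meets `C`, or the square `(P·v)²` of a single linear form.
In the second case `v·P = ± v·r₁` on each `t^⊥`, so every isotropic line through `P` is one of the
two lines missing `U`, and `U ∪ {P}` still does not determine the points of `C`, contradicting
maximality.
-/

open Finset Module

section Cosets

variable {F M : Type*} [Field F] [Fintype F] [AddCommGroup M] [Module F M]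

theorem sum_comp_linearMap_eq_zero {W : Type*} [AddCommGroup W] [Module F W] [Fintype W]
    (hW : 2 ≤ finrank F W) (f : W →ₗ[F] F) (g : F → M) : ∑ w, g (f w) = 0 := by
  classical
  have hker : 1 ≤ finrank F (LinearMap.ker f) := by
    have := f.finrank_range_add_finrank_ker
    have := (LinearMap.range f).finrank_le
    rw [finrank_self] at this
    omega
  have hfiber : ∀ y ∈ univ.image f, ((#{w | f w = y} : ℕ) : F) = 0 := by
    intro y hy
    rw [AddMonoidHom.card_fiber_eq_of_mem_range f (by simpa using hy) ⟨0, map_zero f⟩]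
    have : #{w | f w = 0} = Fintype.card (LinearMap.ker f) := by
      rw [Fintype.card_subtype]; simp [LinearMap.mem_ker]
    rw [this, card_eq_pow_finrank (K := F), Nat.cast_pow, FiniteField.cast_card_eq_zero,
      zero_pow (by omega)]
  rw [sum_comp]
  refine sum_eq_zero fun y hy => ?_
  rw [← Nat.cast_smul_eq_nsmul F, hfiber y hy, zero_smul]

theorem Submodule.exists_missing_cosets {V : Type*} [AddCommGroup V] [Module F V] [Fintype V]
    (S : Submodule F V) (hS : 2 ≤ finrank F (V ⧸ S)) (U : Finset V)
    (hU : ∀ u ∈ U, ∀ u' ∈ U, u - u' ∈ S → u = u')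
    (hcard : #U + 2 = Nat.card (V ⧸ S)) :
    ∃ r₁ r₂ : V, (∀ u ∈ U, u - r₁ ∉ S) ∧ (∀ u ∈ U, u - r₂ ∉ S) ∧
      ∀ φ : V →ₗ[F] F, S ≤ LinearMap.ker φ → ∀ g : F → M,
        ∑ u ∈ U, g (φ u) = -(g (φ r₁) + g (φ r₂)) := by
  classical
  have := Fintype.ofSurjective S.mkQ S.mkQ_surjective
  have hinj : Set.InjOn S.mkQ U := fun u hu u' hu' h =>
    hU u hu u' hu' ((Submodule.Quotient.eq S).1 h)
  have hmissing : #(U.image S.mkQ)ᶜ = 2 := by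
    rw [card_compl, card_image_of_injOn hinj, ← Nat.card_eq_fintype_card, ← hcard]
    omega
  obtain ⟨a, b, hab, hcompl⟩ := card_eq_two.1 hmissing
  obtain ⟨r₁, rfl⟩ := S.mkQ_surjective a
  obtain ⟨r₂, rfl⟩ := S.mkQ_surjective b
  have hoff : ∀ r, S.mkQ r ∈ (U.image S.mkQ)ᶜ → ∀ u ∈ U, u - r ∉ S := fun r hr u hu h =>
    mem_compl.1 hr (mem_image.2 ⟨u, hu, (Submodule.Quotient.eq S).2 h⟩)
  refine ⟨r₁, r₂, hoff _ (by simp [hcompl]), hoff _ (by simp [hcompl]), fun φ hφ g => ?_⟩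
  have hsplit := sum_compl_add_sum (U.image S.mkQ) (fun q => g (S.liftQ φ hφ q))
  rw [sum_comp_linearMap_eq_zero hS, hcompl, sum_pair hab, sum_image hinj] at hsplit
  simp only [Submodule.mkQ_apply, Submodule.liftQ_apply] at hsplit
  exact eq_neg_of_add_eq_zero_right hsplit

end Cosets

theorem Multiset.esymm_cons {R : Type*} [CommSemiring R] (a : R) (s : Multiset R) (n : ℕ) :
    (a ::ₘ s).esymm (n + 1) = s.esymm (n + 1) + a * s.esymm n := by
  simp [Multiset.esymm, Multiset.powersetCard_cons, Multiset.map_map,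
    Multiset.sum_map_mul_left]

theorem Multiset.esymm_one {R : Type*} [CommSemiring R] (s : Multiset R) : s.esymm 1 = s.sum := by
  simp [Multiset.esymm, Multiset.powersetCard_one, Multiset.map_map]

theorem Multiset.two_mul_esymm_two {R : Type*} [CommRing R] (s : Multiset R) :
    2 * s.esymm 2 = s.sum ^ 2 - (s.map (· ^ 2)).sum := by
  induction s using Multiset.induction_on with
  | empty => simp [Multiset.esymm, Multiset.powersetCard_zero_right]
  | cons a s ih =>
    rw [Multiset.esymm_cons, Multiset.esymm_one, Multiset.sum_cons, Multiset.map_cons,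
      Multiset.sum_cons]
    linear_combination ih

section Dot

variable {F : Type*} [Field F]

def dotL : (F × F × F) →ₗ[F] (F × F × F) →ₗ[F] F :=
  LinearMap.mk₂ F dot3
    (fun _ _ _ => by simp only [dot3, Prod.fst_add, Prod.snd_add]; ring)
    (fun _ _ _ => by simp only [dot3, Prod.smul_fst, Prod.smul_snd, smul_eq_mul]; ring)
    (fun _ _ _ => by simp only [dot3, Prod.fst_add, Prod.snd_add]; ring)
    (fun _ _ _ => by simp only [dot3, Prod.smul_fst, Prod.smul_snd, smul_eq_mul]; ring)

@[simp]
theorem dotL_apply (u v : F × F × F) : dotL u v = dot3 u v := rfl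

theorem dot3_comm (u v : F × F × F) : dot3 u v = dot3 v u := by
  simp only [dot3]; ring

theorem dotL_injective : Function.Injective (dotL : (F × F × F) →ₗ[F] _) := by
  intro x y h
  have h₀ := LinearMap.congr_fun h (1, 0, 0)
  have h₁ := LinearMap.congr_fun h (0, 1, 0)
  have h₂ := LinearMap.congr_fun h (0, 0, 1)
  simp only [dotL_apply, dot3] at h₀ h₁ h₂
  ext <;> simp_all

theorem mem_span_of_ker_dotL_le {t x : F × F × F}
    (h : LinearMap.ker (dotL t) ≤ LinearMap.ker (dotL x)) : x ∈ F ∙ t := by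
  have hx : dotL x ∈ F ∙ dotL t := by
    simpa using mem_span_of_iInf_ker_le_ker (L := fun _ : Unit => dotL t) (by simpa using h)
  obtain ⟨c, hc⟩ := Submodule.mem_span_singleton.1 hx
  exact Submodule.mem_span_singleton.2 ⟨c, dotL_injective (by rw [map_smul, hc])⟩

theorem sub_mem_span_or_add_mem_span_of_sq_dot3_eq {t x y : F × F × F}
    (h : ∀ v, dot3 v t = 0 → dot3 x v ^ 2 = dot3 y v ^ 2) : x - y ∈ F ∙ t ∨ x + y ∈ F ∙ t := by
  have hcover : (LinearMap.ker (dotL t) : Set (F × F × F)) ⊆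
      LinearMap.ker (dotL (x - y)) ∪ LinearMap.ker (dotL (x + y)) := by
    intro v hv
    have hsq := h v (by simpa [dot3_comm] using hv)
    simp only [Set.mem_union, SetLike.mem_coe, LinearMap.mem_ker, map_sub, map_add,
      LinearMap.sub_apply, LinearMap.add_apply, dotL_apply, ← mul_eq_zero]
    linear_combination hsq
  exact (AddSubgroupClass.subset_union.1 hcover).imp mem_span_of_ker_dotL_le mem_span_of_ker_dotL_le

end Dot

section Conic

variable {F : Type*} [Field F]

theorem quadQ_smul (c : F) (t : F × F × F) : quadQ (c • t) = c ^ 2 * quadQ t := by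
  simp only [quadQ, Prod.smul_fst, Prod.smul_snd, smul_eq_mul]; ring

theorem quadQ_sub_comm (u v : F × F × F) : quadQ (u - v) = quadQ (v - u) := by
  simp only [quadQ, Prod.fst_sub, Prod.snd_sub]; ring

theorem NoDetermine.eq_of_sub_mem_span {U : Finset (F × F × F)} (hU : NoDetermine U)
    {t : F × F × F} (ht : quadQ t = 0) :
    ∀ u ∈ U, ∀ u' ∈ U, u - u' ∈ F ∙ t → u = u' := by
  intro u hu u' hu' hmem
  obtain ⟨c, hc⟩ := Submodule.mem_span_singleton.1 hmem
  by_contra hne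
  exact hU u hu u' hu' hne (by rw [← hc, quadQ_smul, ht, mul_zero])

theorem NoDetermine.insert_of_quadQ_ne_zero [DecidableEq F] {U : Finset (F × F × F)}
    (hU : NoDetermine U) {v : F × F × F} (hv : ∀ u ∈ U, quadQ (u - v) ≠ 0) :
    NoDetermine (insert v U) := by
  intro x hx y hy hne
  rcases Finset.mem_insert.1 hx with rfl | hxU <;> rcases Finset.mem_insert.1 hy with rfl | hyU
  · exact absurd rfl hne
  · rw [quadQ_sub_comm]; exact hv y hyU
  · exact hv x hxU
  · exact hU x hxU y hyU hne

/-- `dualQuadQ v` is the discriminant of `v.1 + v.2.1 τ + v.2.2 τ²`, whose roots `τ` give the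
points `(1, τ, τ²)` of `C` on the line `l(v)`. -/
def dualQuadQ (v : F × F × F) : F := v.2.1 ^ 2 - 4 * (v.1 * v.2.2)

theorem meetsConic_of_sq_eq_dualQuadQ (h2 : (2 : F) ≠ 0) {v : F × F × F} {s : F}
    (hs : s ^ 2 = dualQuadQ v) : MeetsConic v := by
  by_cases hw : v.2.2 = 0
  · exact ⟨(0, 0, 1), by simp [Prod.ext_iff], by simp [quadQ], by simp [dot3, hw]⟩
  · set τ := (s - v.2.1) / (2 * v.2.2)
    have hτ : τ * (2 * v.2.2) = s - v.2.1 := div_mul_cancel₀ _ (mul_ne_zero h2 hw)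
    refine ⟨(1, τ, τ ^ 2), by simp [Prod.ext_iff], by simp [quadQ], ?_⟩
    have h4w : 4 * v.2.2 ≠ 0 := by
      rw [show (4 : F) = 2 * 2 by norm_num]; exact mul_ne_zero (mul_ne_zero h2 h2) hw
    refine (mul_eq_zero.1 (?_ : dot3 v (1, τ, τ ^ 2) * (4 * v.2.2) = 0)).resolve_right h4w
    simp only [dot3, dualQuadQ] at hs ⊢
    linear_combination hs + (2 * v.2.2 * τ + s + v.2.1) * hτ

end Conic

section Classification

variable {F : Type*} [Field F]

def ternaryForm (A B C a b c : F) (v : F × F × F) : F :=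
  A * v.1 ^ 2 + B * v.2.1 ^ 2 + C * v.2.2 ^ 2 +
    2 * (a * (v.1 * v.2.1) + b * (v.1 * v.2.2) + c * (v.2.1 * v.2.2))

/-- On the plane `y + τ z + τ² w = 0`, in the coordinates `(z, w)`, `ternaryForm A B C a b c` is
`(l z + m w)²`. -/
def TangentSquares (A B C a b c : F) : Prop :=
  ∀ τ : F, ∃ l m : F, A * τ ^ 2 - 2 * a * τ + B = l ^ 2 ∧ A * τ ^ 4 - 2 * b * τ ^ 2 + C = m ^ 2 ∧
    A * τ ^ 3 - a * τ ^ 2 - b * τ + c = l * m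

theorem tangentSquares_of_forall_isotropic (h2 : (2 : F) ≠ 0) {A B C a b c : F}
    (h : ∀ t : F × F × F, t ≠ 0 → quadQ t = 0 →
      ∃ r : F × F × F, ∀ v, dot3 v t = 0 → ternaryForm A B C a b c v = dot3 r v ^ 2) :
    TangentSquares A B C a b c := by
  intro τ
  obtain ⟨r, hr⟩ := h (1, τ, τ ^ 2) (by simp [Prod.ext_iff]) (by simp [quadQ])
  have f₁ := hr (-τ, 1, 0) (by simp [dot3])
  have f₂ := hr (-τ ^ 2, 0, 1) (by simp [dot3])
  have f₃ := hr (-τ - τ ^ 2, 1, 1) (by simp [dot3]; ring)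
  simp only [ternaryForm, dot3] at f₁ f₂ f₃
  exact ⟨r.2.1 - τ * r.1, r.2.2 - τ ^ 2 * r.1, by linear_combination f₁,
    by linear_combination f₂, mul_left_cancel₀ h2 (by linear_combination f₃ - f₁ - f₂)⟩

theorem TangentSquares.exists_eq_sq {α β C b c : F} (hα : α ≠ 0)
    (hT : TangentSquares (α ^ 2) (β ^ 2) C (α * β) b c) :
    ∃ P, ∀ v, ternaryForm (α ^ 2) (β ^ 2) C (α * β) b c v = dot3 P v ^ 2 := by
  obtain ⟨τ₀, rfl⟩ : ∃ τ₀, α * τ₀ = β := ⟨β / α, mul_div_cancel₀ β hα⟩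
  obtain ⟨κ, rfl⟩ : ∃ κ, α * κ = b := ⟨b / α, mul_div_cancel₀ b hα⟩
  -- `τ₀` is the double root of `(α τ - β)²`, where `l = 0`
  have hc : c = α * τ₀ * κ := by
    obtain ⟨l, m, hl, -, hlm⟩ := hT τ₀
    have hl0 : l = 0 := pow_eq_zero_iff two_ne_zero |>.1 <| by linear_combination -hl
    rw [hl0, zero_mul] at hlm
    linear_combination hlm
  have hC : C = κ ^ 2 := by
    obtain ⟨l, m, hl, hm, hlm⟩ := hT (τ₀ + 1)
    have hX : l * m = α ^ 2 * (τ₀ + 1) ^ 2 - α * κ := by linear_combination -hlm + hc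
    have : α ^ 2 * (C - κ ^ 2) = 0 := by
      linear_combination α ^ 2 * hm + m ^ 2 * hl + (l * m + α ^ 2 * (τ₀ + 1) ^ 2 - α * κ) * hX
    exact sub_eq_zero.1 ((mul_eq_zero.1 this).resolve_left (pow_ne_zero 2 hα))
  refine ⟨(α, α * τ₀, κ), fun v => ?_⟩
  simp only [ternaryForm, dot3, hc, hC]
  ring

theorem TangentSquares.eq_sq_mul_dualQuadQ_or_eq_sq (h2 : (2 : F) ≠ 0) {β C b c : F}
    (hT : TangentSquares 0 (β ^ 2) C 0 b c) :
    (∃ s ≠ 0, ∀ v, ternaryForm 0 (β ^ 2) C 0 b c v = s ^ 2 * dualQuadQ v) ∨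
      ∃ P, ∀ v, ternaryForm 0 (β ^ 2) C 0 b c v = dot3 P v ^ 2 := by
  have hline : ∀ τ : F, (c - b * τ) ^ 2 = β ^ 2 * (C - 2 * b * τ ^ 2) := by
    intro τ
    obtain ⟨l, m, hl, hm, hlm⟩ := hT τ
    linear_combination (c - b * τ + l * m) * hlm - m ^ 2 * hl - β ^ 2 * hm
  have k₀ := hline 0
  have k₁ := hline 1
  have k₂ := hline (-1)
  by_cases hb : b = 0
  · obtain ⟨l, m, hl, hm, hlm⟩ := hT 0
    refine Or.inr ⟨(0, l, m), fun v => ?_⟩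
    simp only [ternaryForm, dot3, hb] at hl hm hlm ⊢
    linear_combination v.2.1 ^ 2 * hl + v.2.2 ^ 2 * hm + 2 * (v.2.1 * v.2.2) * hlm
  have hc : c = 0 := by
    have : b * c = 0 := mul_left_cancel₀ (mul_ne_zero h2 h2) (by linear_combination k₂ - k₁)
    exact (mul_eq_zero.1 this).resolve_left hb
  have hbβ : b = -2 * β ^ 2 := by
    have : b * (b + 2 * β ^ 2) = 0 := mul_left_cancel₀ h2 (by linear_combination k₁ + k₂ - 2 * k₀)
    linear_combination (mul_eq_zero.1 this).resolve_left hb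
  have hβ : β ≠ 0 := fun hβ => hb (by rw [hbβ, hβ]; ring)
  have hC : C = 0 := by
    have : β ^ 2 * C = 0 := by linear_combination -k₀ + c * hc
    exact (mul_eq_zero.1 this).resolve_left (pow_ne_zero 2 hβ)
  refine Or.inl ⟨β, hβ, fun v => ?_⟩
  simp only [ternaryForm, dualQuadQ, hc, hC]
  linear_combination 2 * (v.1 * v.2.2) * hbβ

theorem ternaryForm_eq_sq_mul_dualQuadQ_or_eq_sq (h2 : (2 : F) ≠ 0) {A B C a b c : F}
    (h : ∀ t : F × F × F, t ≠ 0 → quadQ t = 0 →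
      ∃ r : F × F × F, ∀ v, dot3 v t = 0 → ternaryForm A B C a b c v = dot3 r v ^ 2) :
    (∃ s ≠ 0, ∀ v, ternaryForm A B C a b c v = s ^ 2 * dualQuadQ v) ∨
      ∃ P, ∀ v, ternaryForm A B C a b c v = dot3 P v ^ 2 := by
  have hT := tangentSquares_of_forall_isotropic h2 h
  obtain ⟨⟨α, β, _⟩, hr⟩ := h (0, 0, 1) (by simp [Prod.ext_iff]) (by simp [quadQ])
  have e₁ := hr (1, 0, 0) (by simp [dot3])
  have e₂ := hr (0, 1, 0) (by simp [dot3])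
  have e₃ := hr (1, 1, 0) (by simp [dot3])
  simp only [ternaryForm, dot3] at e₁ e₂ e₃
  obtain rfl : A = α ^ 2 := by linear_combination e₁
  obtain rfl : B = β ^ 2 := by linear_combination e₂
  obtain rfl : a = α * β := mul_left_cancel₀ h2 (by linear_combination e₃ - e₁ - e₂)
  by_cases hα : α = 0
  · subst hα
    rw [zero_pow two_ne_zero, zero_mul] at hT ⊢
    exact hT.eq_sq_mul_dualQuadQ_or_eq_sq h2
  · exact Or.inr (hT.exists_eq_sq hα)

end Classification

section Sigma

variable {F : Type*} [Field F] {U : Finset (F × F × F)}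

theorem sum_dot3_eq_zero (hsum : ∑ u ∈ U, u = 0) (v : F × F × F) : ∑ u ∈ U, dot3 u v = 0 := by
  simp only [← dotL_apply]
  rw [← LinearMap.sum_apply, ← map_sum, hsum, map_zero, LinearMap.zero_apply]

theorem two_mul_sigmaU_two (hsum : ∑ u ∈ U, u = 0) (v : F × F × F) :
    2 * sigmaU U v 2 = -∑ u ∈ U, dot3 u v ^ 2 := by
  rw [sigmaU, Multiset.two_mul_esymm_two, Multiset.map_map, Finset.sum_map_val,
    Function.comp_def, Finset.sum_map_val, sum_dot3_eq_zero hsum]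
  ring

theorem exists_sigmaU_two_eq_ternaryForm (h2 : (2 : F) ≠ 0) (hsum : ∑ u ∈ U, u = 0) :
    ∃ A B C a b c : F, ∀ v, sigmaU U v 2 = ternaryForm A B C a b c v := by
  refine ⟨-2⁻¹ * ∑ u ∈ U, u.1 ^ 2, -2⁻¹ * ∑ u ∈ U, u.2.1 ^ 2, -2⁻¹ * ∑ u ∈ U, u.2.2 ^ 2,
    -2⁻¹ * ∑ u ∈ U, u.1 * u.2.1, -2⁻¹ * ∑ u ∈ U, u.1 * u.2.2, -2⁻¹ * ∑ u ∈ U, u.2.1 * u.2.2,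
    fun v => mul_left_cancel₀ h2 ?_⟩
  rw [two_mul_sigmaU_two hsum]
  simp only [ternaryForm, dot3, sum_mul, mul_sum, ← sum_add_distrib, ← sum_neg_distrib]
  refine sum_congr rfl fun u _ => ?_
  field_simp
  ring

end Sigma

section Maximal

variable {F : Type*} [Field F] [Fintype F] {U : Finset (F × F × F)}

theorem NoDetermine.exists_sigmaU_two_eq_sq (h2 : (2 : F) ≠ 0)
    (hcard : #U + 2 = Fintype.card F ^ 2) (hU : NoDetermine U) (hsum : ∑ u ∈ U, u = 0)
    {t : F × F × F} (ht : t ≠ 0) (htQ : quadQ t = 0) :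
    ∃ r₁ r₂ : F × F × F, (∀ u ∈ U, u - r₁ ∉ F ∙ t) ∧ (∀ u ∈ U, u - r₂ ∉ F ∙ t) ∧
      r₁ + r₂ ∈ F ∙ t ∧ ∀ v, dot3 v t = 0 → sigmaU U v 2 = dot3 r₁ v ^ 2 := by
  have hfin : finrank F ((F × F × F) ⧸ F ∙ t) = 2 := by
    have := (F ∙ t).finrank_quotient_add_finrank
    rw [finrank_span_singleton ht] at this
    simp only [finrank_prod, finrank_self] at this
    omega
  obtain ⟨r₁, r₂, h₁, h₂, hsum_eq⟩ := (F ∙ t).exists_missing_cosets (M := F) hfin.ge U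
    (hU.eq_of_sub_mem_span htQ)
    (by rw [natCard_eq_pow_finrank (K := F), hfin, Nat.card_eq_fintype_card, hcard])
  have hperp : ∀ v, dot3 v t = 0 → F ∙ t ≤ LinearMap.ker (dotL v) := fun v hv =>
    (Submodule.span_singleton_le_iff_mem _ _).2 (by simpa using hv)
  have hopp : ∀ v, dot3 v t = 0 → dot3 r₁ v + dot3 r₂ v = 0 := by
    intro v hv
    have := hsum_eq (dotL v) (hperp v hv) id
    simp only [id, dotL_apply, dot3_comm v, sum_dot3_eq_zero hsum] at this
    linear_combination this
  refine ⟨r₁, r₂, h₁, h₂, mem_span_of_ker_dotL_le fun v hv => ?_, fun v hv => ?_⟩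
  · simp only [LinearMap.mem_ker, map_add, LinearMap.add_apply, dotL_apply] at hv ⊢
    exact hopp v (by rwa [dot3_comm])
  · have hsq := hsum_eq (dotL v) (hperp v hv) (· ^ 2)
    simp only [dotL_apply, dot3_comm v] at hsq
    apply mul_left_cancel₀ h2
    rw [two_mul_sigmaU_two hsum, hsq]
    linear_combination (dot3 r₂ v - dot3 r₁ v) * hopp v hv

theorem NoDetermine.extendable_of_sigmaU_two_eq_sq [DecidableEq F] (h2 : (2 : F) ≠ 0)
    (hcard : #U + 2 = Fintype.card F ^ 2) (hU : NoDetermine U) (hsum : ∑ u ∈ U, u = 0)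
    {P : F × F × F} (hP : ∀ v, sigmaU U v 2 = dot3 P v ^ 2) :
    ∃ v, v ∉ U ∧ NoDetermine (insert v U) := by
  have hoff : ∀ t, t ≠ 0 → quadQ t = 0 → ∀ u ∈ U, u - P ∉ F ∙ t := by
    intro t ht htQ u hu huP
    obtain ⟨r₁, r₂, h₁, h₂, h₁₂, hσ⟩ := hU.exists_sigmaU_two_eq_sq h2 hcard hsum ht htQ
    rcases sub_mem_span_or_add_mem_span_of_sq_dot3_eq
      (fun v hv => (hP v).symm.trans (hσ v hv)) with h | h
    · exact h₁ u hu (by simpa using add_mem huP h)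
    · exact h₂ u hu (by simpa [sub_eq_add_neg, add_assoc] using sub_mem (add_mem huP h) h₁₂)
  have hPU : P ∉ U := fun hP =>
    hoff (0, 0, 1) (by simp [Prod.ext_iff]) (by simp [quadQ]) P hP (by simp)
  refine ⟨P, hPU, hU.insert_of_quadQ_ne_zero fun u hu hQ => ?_⟩
  have hne : u - P ≠ 0 := sub_ne_zero.2 (ne_of_mem_of_not_mem hu hPU)
  exact hoff (u - P) hne hQ u hu (Submodule.mem_span_singleton_self _)

end Maximal

theorem stmt_17_general {p : ℕ} (hodd : Odd p)
    {F : Type*} [Field F] [Fintype F] [DecidableEq F]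
    (hcard : Fintype.card F = p)
    (U : Finset (F × F × F))
    (hUcard : U.card = p ^ 2 - 2)
    (hU : NoDetermine U)
    (hmax : ¬ ∃ v : F × F × F, v ∉ U ∧ NoDetermine (insert v U))
    (hsum : ∑ u ∈ U, u = 0) :
    ∀ v : F × F × F, v ≠ 0 →
      (¬ MeetsConic v ↔ ¬ ∃ s : F, s ^ 2 = sigmaU U v 2) := by
  have h2 : (2 : F) ≠ 0 := Ring.two_ne_zero fun h => by
    rw [FiniteField.even_card_iff_char_two, hcard, Nat.odd_iff.1 hodd] at h
    exact one_ne_zero h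
  have hcardU : #U + 2 = Fintype.card F ^ 2 := by
    have h1 : 1 < p := hcard ▸ Fintype.one_lt_card
    have : 2 ≤ p ^ 2 := by nlinarith
    rw [hUcard, hcard]
    omega
  obtain ⟨A, B, C, a, b, c, hσ⟩ := exists_sigmaU_two_eq_ternaryForm h2 hsum
  have htangent : ∀ t, t ≠ 0 → quadQ t = 0 →
      ∃ r, ∀ v, dot3 v t = 0 → ternaryForm A B C a b c v = dot3 r v ^ 2 := by
    intro t ht htQ
    obtain ⟨r₁, -, -, -, -, hr⟩ := hU.exists_sigmaU_two_eq_sq h2 hcardU hsum ht htQ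
    exact ⟨r₁, fun v hv => (hσ v).symm.trans (hr v hv)⟩
  rcases ternaryForm_eq_sq_mul_dualQuadQ_or_eq_sq h2 htangent with ⟨s, hs, hD⟩ | ⟨P, hP⟩
  · intro v _
    refine ⟨fun hv ⟨e, he⟩ => hv (meetsConic_of_sq_eq_dualQuadQ h2 (s := e / s) ?_), ?_⟩
    · rw [hσ, hD] at he
      field_simp
      linear_combination he
    · rintro hv ⟨t, ht, htQ, hvt⟩
      obtain ⟨r, hr⟩ := htangent t ht htQ
      exact hv ⟨dot3 r v, by rw [hσ, hr v hvt]⟩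
  · exact absurd (hU.extendable_of_sigmaU_two_eq_sq h2 hcardU hsum fun v => (hσ v).trans (hP v))
      hmax

theorem stmt_17 {p : ℕ} (hp : p.Prime) (hodd : Odd p)
    {F : Type*} [Field F] [Fintype F] [DecidableEq F]
    (hcard : Fintype.card F = p)
    (U : Finset (F × F × F))
    (hUcard : U.card = p ^ 2 - 2)
    (hU : NoDetermine U)
    (hmax : ¬ ∃ v : F × F × F, v ∉ U ∧ NoDetermine (insert v U))
    (hsum : ∑ u ∈ U, u = 0) :
    ∀ v : F × F × F, v ≠ 0 →
      (¬ MeetsConic v ↔ ¬ ∃ s : F, s ^ 2 = sigmaU U v 2) :=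
  stmt_17_general hodd hcard U hUcard hU hmax hsum
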